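/- arXiv:1206.3050 — 2 statements merged into one kernel-verified Lean document; each statement's English description precedes it below -/
import Mathlib

section
/- Let e be an n-tuple of positive integers, z ∈ ℤ/ℓℤ, x ∈ ℝ^n, and let N be a positive integer coprime to ℓ. Then 𝐁_e^{L,Nz}(x,Q) = N^{|e|−n} · Σ_{k∈{0,…,N−1}^n} 𝐁_e^{L,z}((x+ℓk)/N, Q). -/
open scoped BigOperators
open scoped Classical

/-- The periodic Bernoulli function `B_k`. -/
noncomputable def periodicBernoulli (k : ℕ) (x : ℝ) : ℝ :=
  if k = 1 then (if ∃ z : ℤ, x = (z : ℝ) then 0 else Int.fract x - 1 / 2)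
  else Polynomial.eval (Int.fract x) ((Polynomial.bernoulli k).map (algebraMap ℚ ℝ))

/-- The set `J(e,v) = {j : e_j = 1 and v_j ∈ ℤ}`. -/
noncomputable def Jset {n : ℕ} (e : Fin n → ℕ) (v : Fin n → ℝ) : Finset (Fin n) :=
  Finset.univ.filter (fun j => e j = 1 ∧ ∃ z : ℤ, v j = (z : ℝ))

/-- `𝐁_e(v,Q)`. -/
noncomputable def BBQ {n m : ℕ} (Q : Matrix (Fin m) (Fin n) ℝ) (e : Fin n → ℕ)
    (v : Fin n → ℝ) : ℝ :=
  (1 / (m : ℝ)) * ∑ i : Fin m,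
    (∏ j ∈ Jset e v, Real.sign (Q i j) / 2) *
      ∏ j ∈ (Jset e v)ᶜ, periodicBernoulli (e j) (v j)

/-- `𝐁_e^{L,z}(x,Q) = 𝐁_e(x,Q) − ℓ^{1−n+|e|} Σ_{y ∈ {0,…,ℓ−1}^n, L(y)=z} 𝐁_e((x+y)/ℓ, Q)`,
where `L(y) = a_1 y_1 + ⋯ + a_n y_n mod ℓ`. -/
noncomputable def BBLz {n m : ℕ} (ℓ : ℕ) (a : Fin n → ℤ)
    (Q : Matrix (Fin m) (Fin n) ℝ) (e : Fin n → ℕ) (z : ZMod ℓ) (x : Fin n → ℝ) : ℝ :=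
  BBQ Q e x - (ℓ : ℝ) ^ ((1 : ℤ) - (n : ℤ) + ∑ j, (e j : ℤ)) *
    ∑ y : Fin n → Fin ℓ,
      if (∑ j, (a j : ZMod ℓ) * ((y j : ℕ) : ZMod ℓ)) = z then
        BBQ Q e (fun j => (x j + ((y j : ℕ) : ℝ)) / (ℓ : ℝ)) else 0

/-!
Write `𝐁_e(v,Q)` as the row average of the products `∏_j B_{e_j}(v_j)`, where at the jumps of
`B_1` the factor takes the value `sign(Q_ij)/2`. Each factor is `1`-periodic and satisfies Raabe's
multiplication formula `M^{k-1} Σ_{r<M} B_k((x+r)/M) = B_k(x)`, also at the jumps (there the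
formula for `b_1` at `0` says that `Σ_{0<r<M} B_1(r/M) = 0`). Hence
`𝐁_e(v,Q) = M^{|e|-n} Σ_{c mod M} 𝐁_e((v+c)/M, Q)`, and `𝐁_e((x+w)/M, Q)` depends only on
`w mod M`.

Both sides of the relation then become sums over residues modulo `Nℓ`. The untwisted terms agree
because `k ↦ ℓk` permutes `(ℤ/N)^n`. The twisted terms both equal
`N^{|e|-n} Σ_{w mod Nℓ, L(w) = Nz} 𝐁_e((x+w)/(Nℓ), Q)`: on the left through `w = y + ℓk`, on the
right through the Chinese remainder parametrisation `w = ℓk + Ny`, for which `L(w) = N·L(y)` with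
`N` invertible modulo `ℓ`.
-/
open Finset Function

noncomputable def signedPeriodicBernoulli (s : ℝ) (k : ℕ) (x : ℝ) : ℝ :=
  if k = 1 ∧ ∃ z : ℤ, x = z then s / 2 else bernoulliFun k (Int.fract x)

theorem periodic_signedPeriodicBernoulli (s : ℝ) (k : ℕ) :
    Periodic (signedPeriodicBernoulli s k) 1 := by
  intro x
  have hint : (∃ z : ℤ, x + 1 = z) ↔ ∃ z : ℤ, x = z :=
    ⟨fun ⟨z, hz⟩ => ⟨z - 1, by push_cast; linarith⟩,
      fun ⟨z, hz⟩ => ⟨z + 1, by push_cast; linarith⟩⟩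
  simp only [signedPeriodicBernoulli, hint, Int.fract_add_one]

theorem signedPeriodicBernoulli_add_intCast (s : ℝ) (k : ℕ) (x : ℝ) (t : ℤ) :
    signedPeriodicBernoulli s k (x + t) = signedPeriodicBernoulli s k x := by
  simpa using (periodic_signedPeriodicBernoulli s k).int_mul t x

theorem signedPeriodicBernoulli_of_mem_Ico {s y : ℝ} {k : ℕ} (hy : y ∈ Set.Ico (0 : ℝ) 1)
    (h : ¬(k = 1 ∧ y = 0)) : signedPeriodicBernoulli s k y = bernoulliFun k y := by
  rw [signedPeriodicBernoulli, Int.fract_eq_self.mpr hy, if_neg]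
  rintro ⟨hk, z, rfl⟩
  have h0 : (0 : ℤ) ≤ z := by exact_mod_cast hy.1
  have h1 : z < 1 := by exact_mod_cast hy.2
  exact h ⟨hk, by simp [show z = 0 by omega]⟩

theorem Function.Periodic.sum_range_add_div {g : ℝ → ℝ} (hg : Periodic g 1) (M : ℕ)
    (hM : M ≠ 0) : Periodic (fun x => ∑ r ∈ range M, g ((x + r) / M)) 1 := by
  intro x
  have hwrap : g ((x + M) / M) = g ((x + (0 : ℕ)) / M) := by
    rw [← hg ((x + (0 : ℕ)) / M)]
    congr 1
    field_simp
    push_cast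
    ring
  have hshift : ∑ r ∈ range M, g ((x + 1 + r) / M) = ∑ r ∈ range M, g ((x + (r + 1 : ℕ)) / M) :=
    sum_congr rfl fun r _ => by push_cast; ring_nf
  have h1 := sum_range_succ' (fun r : ℕ => g ((x + r) / M)) M
  have h2 := sum_range_succ (fun r : ℕ => g ((x + r) / M)) M
  simp only at h1 h2 ⊢
  linarith

theorem signedPeriodicBernoulli_one_zero (s : ℝ) : signedPeriodicBernoulli s 1 0 = s / 2 :=
  if_pos ⟨rfl, 0, by simp⟩

theorem add_natCast_div_mem_Ico {y : ℝ} (hy : y ∈ Set.Ico (0 : ℝ) 1) {r M : ℕ} (hr : r < M) :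
    (y + r) / M ∈ Set.Ico (0 : ℝ) 1 := by
  have hrM : (r : ℝ) + 1 ≤ M := by exact_mod_cast hr
  constructor
  · exact div_nonneg (by linarith [hy.1, r.cast_nonneg (α := ℝ)]) (by positivity)
  · rw [div_lt_one (by linarith [r.cast_nonneg (α := ℝ)])]
    linarith [hy.2]

theorem sum_signedPeriodicBernoulli_one_natCast_div (s : ℝ) {M : ℕ} (hM : M ≠ 0) :
    ∑ r ∈ range M, signedPeriodicBernoulli s 1 (r / M) = s / 2 := by
  have hM' : (M : ℝ) ≠ 0 := by exact_mod_cast hM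
  have hmul := bernoulliFun_mul 1 hM 0
  obtain ⟨M, rfl⟩ := Nat.exists_eq_succ_of_ne_zero hM
  rw [sum_range_succ'] at hmul ⊢
  have hterm : ∀ r ∈ range M, signedPeriodicBernoulli s 1 ((r + 1 : ℕ) / (M + 1 : ℕ)) =
      bernoulliFun 1 (0 + (r + 1 : ℕ) / (M + 1 : ℕ)) := fun r hr => by
    rw [zero_add, signedPeriodicBernoulli_of_mem_Ico]
    · simpa using add_natCast_div_mem_Ico (Set.left_mem_Ico.mpr one_pos)
        (Nat.succ_lt_succ (mem_range.mp hr))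
    · simp only [true_and, div_eq_zero_iff, not_or]
      exact ⟨by positivity, by positivity⟩
  rw [sum_congr rfl hterm]
  set S := ∑ r ∈ range M, bernoulliFun 1 (0 + (r + 1 : ℕ) / (M + 1 : ℕ))
  simp only [Nat.cast_zero, mul_zero, zero_div, add_zero, bernoulliFun_one, pow_one,
    div_self hM', signedPeriodicBernoulli_one_zero] at hmul ⊢
  linarith

theorem pow_mul_sum_signedPeriodicBernoulli_add_div_of_mem_Ico (s : ℝ) (k : ℕ) {M : ℕ}
    (hM : M ≠ 0) {y : ℝ} (hy : y ∈ Set.Ico (0 : ℝ) 1) :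
    (M : ℝ) ^ k * ∑ r ∈ range M, signedPeriodicBernoulli s k ((y + r) / M) =
      M * signedPeriodicBernoulli s k y := by
  have hM' : (M : ℝ) ≠ 0 := by exact_mod_cast hM
  by_cases hk : k = 1 ∧ y = 0
  · obtain ⟨rfl, rfl⟩ := hk
    simp only [zero_add, pow_one, sum_signedPeriodicBernoulli_one_natCast_div s hM,
      signedPeriodicBernoulli_one_zero]
  have hterm : ∀ r ∈ range M, signedPeriodicBernoulli s k ((y + r) / M) =
      bernoulliFun k ((y + r) / M) := fun r hr => by
    refine signedPeriodicBernoulli_of_mem_Ico (add_natCast_div_mem_Ico hy (mem_range.mp hr)) ?_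
    rintro ⟨rfl, h0⟩
    have hyr : y + r = 0 := by simpa [hM'] using h0
    exact hk ⟨rfl, by linarith [hy.1, r.cast_nonneg (α := ℝ)]⟩
  have hmul := bernoulliFun_mul k hM (y / M)
  rw [mul_div_cancel₀ _ hM'] at hmul
  rw [signedPeriodicBernoulli_of_mem_Ico hy hk, sum_congr rfl hterm, hmul]
  simp only [add_div]
  field_simp

theorem pow_mul_sum_signedPeriodicBernoulli_add_div (s : ℝ) (k : ℕ) {M : ℕ} (hM : M ≠ 0) (x : ℝ) :
    (M : ℝ) ^ k * ∑ r ∈ range M, signedPeriodicBernoulli s k ((x + r) / M) =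
      M * signedPeriodicBernoulli s k x := by
  have hper := periodic_signedPeriodicBernoulli s k
  have hsum := (hper.sum_range_add_div M hM).int_mul ⌊x⌋ (Int.fract x)
  have hval := hper.int_mul ⌊x⌋ (Int.fract x)
  rw [mul_one, Int.fract_add_floor] at hsum hval
  rw [hsum, hval]
  exact pow_mul_sum_signedPeriodicBernoulli_add_div_of_mem_Ico s k hM
    ⟨Int.fract_nonneg x, Int.fract_lt_one x⟩

theorem periodicBernoulli_eq_signedPeriodicBernoulli {k : ℕ} {x : ℝ} (s : ℝ)
    (h : ¬(k = 1 ∧ ∃ z : ℤ, x = z)) :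
    periodicBernoulli k x = signedPeriodicBernoulli s k x := by
  rw [signedPeriodicBernoulli, if_neg h, periodicBernoulli]
  by_cases hk : k = 1
  · subst hk
    rw [if_pos rfl, if_neg fun hx => h ⟨rfl, hx⟩, bernoulliFun_one]
  · rw [if_neg hk]
    rfl

section BBQ

variable {n m : ℕ} (Q : Matrix (Fin m) (Fin n) ℝ) (e : Fin n → ℕ)

theorem BBQ_eq_sum_prod (v : Fin n → ℝ) :
    BBQ Q e v = 1 / m * ∑ i, ∏ j, signedPeriodicBernoulli (Real.sign (Q i j)) (e j) (v j) := by
  rw [BBQ]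
  congr 1
  refine sum_congr rfl fun i _ => ?_
  rw [← prod_mul_prod_compl (Jset e v)]
  congr 1
  · exact prod_congr rfl fun j hj => (if_pos (by simpa [Jset] using hj)).symm
  · exact prod_congr rfl fun j hj =>
      periodicBernoulli_eq_signedPeriodicBernoulli _ (by simpa [Jset] using hj)

theorem BBQ_add_intCast (v : Fin n → ℝ) (t : Fin n → ℤ) :
    BBQ Q e (fun j => v j + t j) = BBQ Q e v := by
  simp only [BBQ_eq_sum_prod, signedPeriodicBernoulli_add_intCast]

theorem BBQ_add_div_congr {M : ℕ} (hM : M ≠ 0) (x : Fin n → ℝ) {w w' : Fin n → ℕ}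
    (h : ∀ j, (w j : ZMod M) = w' j) :
    BBQ Q e (fun j => (x j + w j) / M) = BBQ Q e (fun j => (x j + w' j) / M) := by
  have hdvd : ∀ j, ∃ t : ℤ, (w' j : ℤ) - w j = M * t := fun j =>
    (ZMod.intCast_eq_intCast_iff_dvd_sub _ _ M).mp (by simpa using h j)
  choose t ht using hdvd
  rw [← BBQ_add_intCast Q e _ t]
  congr 1
  funext j
  have htj : (w' j : ℝ) = w j + M * t j := by exact_mod_cast (by linarith [ht j] : (w' j : ℤ) = _)
  rw [htj]
  field_simp
  ring

theorem BBQ_eq_sum_add_div {M : ℕ} (hM : M ≠ 0) (v : Fin n → ℝ) :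
    BBQ Q e v = (M : ℝ) ^ ((∑ j, (e j : ℤ)) - n) *
      ∑ c : Fin n → Fin M, BBQ Q e (fun j => (v j + (c j : ℕ)) / M) := by
  have hM' : (M : ℝ) ≠ 0 := by exact_mod_cast hM
  have hrow : ∀ i, (M : ℝ) ^ (∑ j, e j) * ∑ c : Fin n → Fin M,
      ∏ j, signedPeriodicBernoulli (Real.sign (Q i j)) (e j) ((v j + (c j : ℕ)) / M) =
        M ^ n * ∏ j, signedPeriodicBernoulli (Real.sign (Q i j)) (e j) (v j) := fun i => by
    rw [← Fintype.prod_sum fun j (r : Fin M) =>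
        signedPeriodicBernoulli (Real.sign (Q i j)) (e j) ((v j + (r : ℕ)) / M),
      ← prod_pow_eq_pow_sum, ← prod_mul_distrib]
    calc _ = ∏ j, (M : ℝ) * signedPeriodicBernoulli (Real.sign (Q i j)) (e j) (v j) :=
          prod_congr rfl fun j _ => by
            rw [Fin.sum_univ_eq_sum_range
              (fun r => signedPeriodicBernoulli (Real.sign (Q i j)) (e j) ((v j + r) / M)) M]
            exact pow_mul_sum_signedPeriodicBernoulli_add_div _ _ hM _
      _ = _ := by rw [prod_mul_distrib, prod_const, card_univ, Fintype.card_fin]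
  have hsum : (M : ℝ) ^ (∑ j, e j) *
      ∑ c : Fin n → Fin M, BBQ Q e (fun j => (v j + (c j : ℕ)) / M) = M ^ n * BBQ Q e v := by
    simp only [BBQ_eq_sum_prod]
    rw [← mul_sum, sum_comm, mul_left_comm, mul_sum, sum_congr rfl fun i _ => hrow i, ← mul_sum,
      mul_left_comm]
  rw [zpow_sub₀ hM', zpow_natCast, ← Nat.cast_sum, zpow_natCast, div_mul_eq_mul_div, hsum]
  field_simp

end BBQ

theorem Function.Bijective.comp_left_prod {ι α β γ : Type*} {g : α × β → γ} (hg : Bijective g) :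
    Bijective fun p : (ι → α) × (ι → β) => fun j => g (p.1 j, p.2 j) :=
  hg.comp_left.comp (Equiv.arrowProdEquivProdArrow ι _ _).symm.bijective

section ResidueSystems

variable {ι : Type*} [Fintype ι] [DecidableEq ι] {M : ℕ} [NeZero M]

theorem sum_comp_eq_sum_zmod {α β : Type*} [Fintype α] [AddCommMonoid β] (F : (ι → ℕ) → β)
    (hF : ∀ w w' : ι → ℕ, (∀ j, (w j : ZMod M) = w' j) → F w = F w')
    (ψ : α → ι → ℕ) (hψ : Bijective fun a j => (ψ a j : ZMod M)) :
    ∑ a, F (ψ a) = ∑ r : ι → ZMod M, F fun j => (r j).val :=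
  Fintype.sum_bijective _ hψ _ _ fun a => hF _ _ fun j => by simp

variable (M) in
theorem bijective_natCast_fin : Bijective fun c : Fin M => ((c : ℕ) : ZMod M) := by
  refine (Fintype.bijective_iff_injective_and_card _).mpr ⟨fun c c' h => Fin.ext ?_, by simp⟩
  simpa [ZMod.val_cast_of_lt c.isLt, ZMod.val_cast_of_lt c'.isLt] using congrArg ZMod.val h

theorem bijective_mul_natCast_fin {u : ℕ} (hu : u.Coprime M) :
    Bijective fun c : Fin M => ((u * c : ℕ) : ZMod M) := by
  have hcomp : (fun c : Fin M => ((u * c : ℕ) : ZMod M)) =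
      (fun r => (ZMod.unitOfCoprime u hu : ZMod M) * r) ∘ fun c : Fin M => ((c : ℕ) : ZMod M) := by
    funext c
    simp
  rw [hcomp]
  exact (ZMod.unitOfCoprime u hu).mulLeft_bijective.comp (bijective_natCast_fin M)

end ResidueSystems

theorem bijective_add_mul_natCast {ℓ N : ℕ} [NeZero ℓ] [NeZero N] :
    Bijective fun p : Fin ℓ × Fin N => ((p.1 + ℓ * p.2 : ℕ) : ZMod (N * ℓ)) :=
  (bijective_natCast_fin (N * ℓ)).comp (finProdFinEquiv.bijective.comp Prod.swap_bijective)

theorem bijective_mul_add_mul_natCast {ℓ N : ℕ} [NeZero ℓ] [NeZero N] (h : ℓ.Coprime N) :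
    Bijective fun p : Fin N × Fin ℓ => ((ℓ * p.1 + N * p.2 : ℕ) : ZMod (N * ℓ)) := by
  refine (Fintype.bijective_iff_injective_and_card _).mpr ⟨?_, by simp [mul_comm]⟩
  rintro ⟨k, y⟩ ⟨k', y'⟩ hky
  rw [ZMod.natCast_eq_natCast_iff] at hky
  have hk : ((ℓ * k : ℕ) : ZMod N) = ((ℓ * k' : ℕ) : ZMod N) := by
    simpa using (ZMod.natCast_eq_natCast_iff _ _ _).mpr (hky.of_mul_right ℓ)
  have hy : ((N * y : ℕ) : ZMod ℓ) = ((N * y' : ℕ) : ZMod ℓ) := by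
    simpa using (ZMod.natCast_eq_natCast_iff _ _ _).mpr (hky.of_mul_left N)
  exact Prod.ext ((bijective_mul_natCast_fin h).injective hk)
    ((bijective_mul_natCast_fin h.symm).injective hy)

section Fibers

variable {n m : ℕ} (ℓ : ℕ) (a : Fin n → ℤ) (Q : Matrix (Fin m) (Fin n) ℝ) (e : Fin n → ℕ)

noncomputable def BBQOnFiber (M : ℕ) (z : ZMod ℓ) (x : Fin n → ℝ) (w : Fin n → ℕ) : ℝ :=
  if ∑ j, (a j : ZMod ℓ) * (w j : ZMod ℓ) = z then BBQ Q e (fun j => (x j + w j) / M) else 0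

theorem BBLz_eq_sub_sum (z : ZMod ℓ) (x : Fin n → ℝ) :
    BBLz ℓ a Q e z x = BBQ Q e x - (ℓ : ℝ) ^ ((1 : ℤ) - n + ∑ j, (e j : ℤ)) *
      ∑ y : Fin n → Fin ℓ, BBQOnFiber ℓ a Q e ℓ z x fun j => y j :=
  rfl

theorem BBQOnFiber_congr {M : ℕ} (hM : M ≠ 0) (hℓM : ℓ ∣ M) (z : ZMod ℓ) (x : Fin n → ℝ)
    {w w' : Fin n → ℕ} (h : ∀ j, (w j : ZMod M) = w' j) :
    BBQOnFiber ℓ a Q e M z x w = BBQOnFiber ℓ a Q e M z x w' := by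
  have hℓ : ∀ j, (w j : ZMod ℓ) = w' j := fun j => by
    simpa using congrArg (ZMod.castHom hℓM (ZMod ℓ)) (h j)
  simp only [BBQOnFiber, hℓ, BBQ_add_div_congr Q e hM x h]

variable {ℓ} {N : ℕ} [NeZero N]

theorem sum_BBQ_mul_add_div (h : ℓ.Coprime N) (x : Fin n → ℝ) :
    ∑ k : Fin n → Fin N, BBQ Q e (fun j => (x j + ℓ * (k j : ℕ)) / N) =
      ∑ k : Fin n → Fin N, BBQ Q e (fun j => (x j + (k j : ℕ)) / N) := by
  have hF := fun w w' => BBQ_add_div_congr Q e (NeZero.ne N) x (w := w) (w' := w')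
  have hmul := sum_comp_eq_sum_zmod _ hF _ (bijective_mul_natCast_fin h).comp_left
  have hone := sum_comp_eq_sum_zmod _ hF _ (bijective_natCast_fin N).comp_left
  simpa using hmul.trans hone.symm

variable [NeZero ℓ]

theorem sum_BBQOnFiber_eq_sum_zmod (z : ZMod ℓ) (x : Fin n → ℝ) :
    ∑ y : Fin n → Fin ℓ, BBQOnFiber ℓ a Q e ℓ z x (fun j => y j) =
      (N : ℝ) ^ ((∑ j, (e j : ℤ)) - n) *
        ∑ r : Fin n → ZMod (N * ℓ), BBQOnFiber ℓ a Q e (N * ℓ) z x fun j => (r j).val := by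
  have hN : (N : ℝ) ≠ 0 := Nat.cast_ne_zero.mpr (NeZero.ne N)
  have hℓ : (ℓ : ℝ) ≠ 0 := Nat.cast_ne_zero.mpr (NeZero.ne ℓ)
  have hF := fun w w' => BBQOnFiber_congr ℓ a Q e (NeZero.ne (N * ℓ)) (dvd_mul_left ℓ N) z x
    (w := w) (w' := w')
  rw [← sum_comp_eq_sum_zmod _ hF _ (bijective_add_mul_natCast.comp_left_prod),
    Fintype.sum_prod_type, mul_sum]
  refine sum_congr rfl fun y _ => ?_
  have hcond : ∀ k : Fin n → Fin N, ∑ j, (a j : ZMod ℓ) * ((y j + ℓ * k j : ℕ) : ZMod ℓ) =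
      ∑ j, (a j : ZMod ℓ) * (y j : ZMod ℓ) := fun k => by simp
  simp only [BBQOnFiber, hcond]
  split_ifs
  · rw [BBQ_eq_sum_add_div Q e (NeZero.ne N)]
    congr 1
    refine sum_congr rfl fun k _ => ?_
    congr 1
    funext j
    push_cast
    field_simp
    ring
  · simp

theorem sum_sum_BBQOnFiber_eq_sum_zmod (h : ℓ.Coprime N) (z : ZMod ℓ) (x : Fin n → ℝ) :
    ∑ k : Fin n → Fin N, ∑ y : Fin n → Fin ℓ,
        BBQOnFiber ℓ a Q e ℓ z (fun j => (x j + ℓ * (k j : ℕ)) / N) (fun j => y j) =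
      ∑ r : Fin n → ZMod (N * ℓ), BBQOnFiber ℓ a Q e (N * ℓ) (N * z) x fun j => (r j).val := by
  have hN : (N : ℝ) ≠ 0 := Nat.cast_ne_zero.mpr (NeZero.ne N)
  have hℓ : (ℓ : ℝ) ≠ 0 := Nat.cast_ne_zero.mpr (NeZero.ne ℓ)
  have hF := fun w w' => BBQOnFiber_congr ℓ a Q e (NeZero.ne (N * ℓ)) (dvd_mul_left ℓ N) (N * z)
    x (w := w) (w' := w')
  rw [← sum_comp_eq_sum_zmod _ hF _ ((bijective_mul_add_mul_natCast h).comp_left_prod),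
    Fintype.sum_prod_type]
  refine sum_congr rfl fun k _ => sum_congr rfl fun y _ => ?_
  have hcond : ∑ j, (a j : ZMod ℓ) * ((ℓ * k j + N * y j : ℕ) : ZMod ℓ) = N * z ↔
      ∑ j, (a j : ZMod ℓ) * (y j : ZMod ℓ) = z := by
    have hsum : ∑ j, (a j : ZMod ℓ) * ((ℓ * k j + N * y j : ℕ) : ZMod ℓ) =
        N * ∑ j, (a j : ZMod ℓ) * (y j : ZMod ℓ) := by
      simp only [Nat.cast_add, Nat.cast_mul, ZMod.natCast_self, zero_mul, zero_add, mul_sum]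
      exact sum_congr rfl fun j _ => by ring
    rw [hsum, ((ZMod.isUnit_iff_coprime N ℓ).mpr h.symm).mul_right_inj]
  simp only [BBQOnFiber, hcond]
  congr 2
  funext j
  push_cast
  field_simp
  ring

end Fibers

theorem BBLz_distribution_relation_general {n m : ℕ}
    (ℓ : ℕ) (hℓ : ℓ.Prime) (a : Fin n → ℤ)
    (Q : Matrix (Fin m) (Fin n) ℝ)
    (e : Fin n → ℕ)
    (z : ZMod ℓ) (x : Fin n → ℝ)
    (N : ℕ) (hN : 0 < N) (hNℓ : Nat.Coprime N ℓ) :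
    BBLz ℓ a Q e ((N : ZMod ℓ) * z) x = (N : ℝ) ^ ((∑ j, (e j : ℤ)) - (n : ℤ)) *
      ∑ k : Fin n → Fin N,
        BBLz ℓ a Q e z (fun j => (x j + (ℓ : ℝ) * ((k j : ℕ) : ℝ)) / (N : ℝ)) := by
  have : NeZero ℓ := ⟨hℓ.ne_zero⟩
  have : NeZero N := ⟨hN.ne'⟩
  simp only [BBLz_eq_sub_sum]
  rw [sum_BBQOnFiber_eq_sum_zmod (N := N), sum_sub_distrib, ← mul_sum, mul_sub,
    sum_sum_BBQOnFiber_eq_sum_zmod a Q e hNℓ.symm, sum_BBQ_mul_add_div Q e hNℓ.symm,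
    ← BBQ_eq_sum_add_div Q e hN.ne']
  ring

/-- Distribution relation for `𝐁_e^{L,z}`: for `N` coprime to `ℓ`,
`𝐁_e^{L,Nz}(x,Q) = N^{|e|−n} Σ_{k ∈ {0,…,N−1}^n} 𝐁_e^{L,z}((x+ℓk)/N, Q)`. -/
theorem BBLz_distribution_relation {n m : ℕ} (hm : 0 < m)
    (ℓ : ℕ) (hℓ : ℓ.Prime) (a : Fin n → ℤ) (ha : ∀ j, ¬ (ℓ : ℤ) ∣ a j)
    (Q : Matrix (Fin m) (Fin n) ℝ) (hQ : ∀ i j, Q i j ≠ 0)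
    (e : Fin n → ℕ) (he : ∀ j, 0 < e j)
    (z : ZMod ℓ) (x : Fin n → ℝ)
    (N : ℕ) (hN : 0 < N) (hNℓ : Nat.Coprime N ℓ) :
    BBLz ℓ a Q e ((N : ZMod ℓ) * z) x = (N : ℝ) ^ ((∑ j, (e j : ℤ)) - (n : ℤ)) *
      ∑ k : Fin n → Fin N,
        BBLz ℓ a Q e z (fun j => (x j + (ℓ : ℝ) * ((k j : ℕ) : ℝ)) / (N : ℝ)) :=
  BBLz_distribution_relation_general ℓ hℓ a Q e z x N hN hNℓ
end

section
/- Let x = (x_1,…,x_n) ∈ ℝ^n with x_j ∉ ℤ for every j, let z ∈ ℤ/ℓℤ with lift z̃ ∈ ℤ, and let 𝟙 = (1,…,1). Then 𝐁_𝟙^{L,z}(x,Q) = −Σ_{k=1}^{ℓ−1} e(−k(z̃ + a_1⌊x_1⌋ + … + a_n⌊x_n⌋)/ℓ) / ∏_{j=1}^n (e(k·a_j/ℓ) − 1). In particular in this case the value is independent of Q. -/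
open scoped BigOperators
open scoped Classical

/-- `e(t) = exp(2πit)`. -/
noncomputable def eE (t : ℝ) : ℂ := Complex.exp (2 * Real.pi * Complex.I * t)

/-! For non-integral `v`, `𝐁_𝟙(v,Q) = ∏ⱼ ((vⱼ))` with the sawtooth `((t)) = {t} - 1/2`, so `Q`
drops out. Detecting `L(y) = z` with the characters `y ↦ e(k(L(y) - z̃)/ℓ)`, `k < ℓ`, factors the
sum over `y` into one-variable twisted sums `Σ_{t<ℓ} e(ct/ℓ) (((x + t)/ℓ))`. The summand is
`ℓ`-periodic in `t`, so `t` may be shifted by `⌊x⌋`, after which the sawtooth is linear in `t` and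
geometric sums give `((x))` for `c = 0` and `e(-c⌊x⌋/ℓ)/(e(c/ℓ) - 1)` for `ℓ ∤ c`. The `k = 0` term
cancels `𝐁_𝟙(x,Q)`; for `0 < k < ℓ` no `k aⱼ` is divisible by the prime `ℓ`. -/

open Finset

lemma eE_add (s t : ℝ) : eE (s + t) = eE s * eE t := by
  simp only [eE, Complex.ofReal_add, mul_add, Complex.exp_add]

lemma eE_sum {ι : Type*} (s : Finset ι) (f : ι → ℝ) :
    eE (∑ i ∈ s, f i) = ∏ i ∈ s, eE (f i) := by
  simp only [eE, Complex.ofReal_sum, Finset.mul_sum, Complex.exp_sum]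

lemma eE_natCast_mul (k : ℕ) (t : ℝ) : eE (k * t) = eE t ^ k := by
  rw [eE, eE, ← Complex.exp_nat_mul]
  push_cast
  ring_nf

lemma eE_eq_one_iff (t : ℝ) : eE t = 1 ↔ ∃ q : ℤ, t = q := by
  have h2πI : (2 * Real.pi * Complex.I : ℂ) ≠ 0 := by simp [Real.pi_ne_zero]
  simp only [eE, Complex.exp_eq_one_iff]
  refine exists_congr fun q => ?_
  rw [mul_comm (q : ℂ), mul_right_inj' h2πI]
  exact_mod_cast Iff.rfl

lemma eE_intCast (q : ℤ) : eE q = 1 := (eE_eq_one_iff _).2 ⟨q, rfl⟩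

lemma eE_zero : eE 0 = 1 := by exact_mod_cast eE_intCast 0

lemma eE_intCast_div_eq_one_iff {ℓ : ℕ} (hℓ : ℓ ≠ 0) (c : ℤ) :
    eE (c / ℓ) = 1 ↔ (ℓ : ℤ) ∣ c := by
  have hℓR : (ℓ : ℝ) ≠ 0 := Nat.cast_ne_zero.2 hℓ
  rw [eE_eq_one_iff]
  constructor
  · rintro ⟨q, hq⟩
    rw [div_eq_iff hℓR] at hq
    exact ⟨q, by rw [mul_comm]; exact_mod_cast hq⟩
  · rintro ⟨q, rfl⟩
    exact ⟨q, by push_cast; field_simp⟩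

lemma eE_intCast_div_pow_self {ℓ : ℕ} (hℓ : ℓ ≠ 0) (c : ℤ) : eE (c / ℓ) ^ ℓ = 1 := by
  rw [← eE_natCast_mul, mul_div_cancel₀ _ (Nat.cast_ne_zero.2 hℓ), eE_intCast]

lemma Function.Periodic.sum_range_add {M : Type*} [AddCommGroup M] {g : ℤ → M} {ℓ : ℕ}
    (hg : Function.Periodic g ℓ) (s : ℤ) :
    ∑ t ∈ range ℓ, g (t + s) = ∑ t ∈ range ℓ, g t := by
  have step : ∀ s : ℤ, ∑ t ∈ range ℓ, g (t + (s + 1)) = ∑ t ∈ range ℓ, g (t + s) := by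
    intro s
    have h := (sum_range_succ' (fun t : ℕ => g (t + s)) ℓ).symm.trans
      (sum_range_succ (fun t : ℕ => g (t + s)) ℓ)
    rw [Nat.cast_zero, zero_add, add_comm (ℓ : ℤ), hg s, add_left_inj] at h
    simpa only [Nat.cast_succ, add_assoc, add_comm (1 : ℤ)] using h
  induction s using Int.induction_on with
  | zero => simp only [add_zero]
  | succ s ih => rw [step, ih]
  | pred s ih => rw [← ih, ← step, sub_add_cancel]

lemma geom_sum_eq_zero_of_pow_eq_one {K : Type*} [DivisionRing K] {ω : K} {ℓ : ℕ}
    (hω : ω ≠ 1) (hωℓ : ω ^ ℓ = 1) : ∑ r ∈ range ℓ, ω ^ r = 0 := by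
  rw [geom_sum_eq hω, hωℓ, sub_self, zero_div]

lemma sub_one_mul_sum_range_mul_pow {R : Type*} [CommRing R] (ω : R) (n : ℕ) :
    (ω - 1) * ∑ r ∈ range n, (r : R) * ω ^ r = n * ω ^ n - ω * ∑ r ∈ range n, ω ^ r := by
  induction n with
  | zero => simp
  | succ n ih =>
    rw [sum_range_succ, sum_range_succ, mul_add, ih]
    push_cast
    ring

lemma sum_range_mul_pow_of_pow_eq_one {K : Type*} [Field K] {ω : K} {ℓ : ℕ}
    (hω : ω ≠ 1) (hωℓ : ω ^ ℓ = 1) : ∑ r ∈ range ℓ, (r : K) * ω ^ r = ℓ / (ω - 1) := by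
  have hω' : ω - 1 ≠ 0 := sub_ne_zero.2 hω
  rw [eq_div_iff hω', mul_comm, sub_one_mul_sum_range_mul_pow, hωℓ,
    geom_sum_eq_zero_of_pow_eq_one hω hωℓ, mul_zero, sub_zero, mul_one]

lemma sum_range_eE_mul_div {ℓ : ℕ} (hℓ : ℓ ≠ 0) (N : ℤ) :
    ∑ k ∈ range ℓ, eE (k * N / ℓ) = if (ℓ : ℤ) ∣ N then (ℓ : ℂ) else 0 := by
  simp only [mul_div_assoc, eE_natCast_mul]
  split_ifs with h
  · simp [(eE_intCast_div_eq_one_iff hℓ N).2 h]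
  · exact geom_sum_eq_zero_of_pow_eq_one (mt (eE_intCast_div_eq_one_iff hℓ N).1 h)
      (eE_intCast_div_pow_self hℓ N)

lemma Nat.Prime.not_intCast_dvd_mul {ℓ k : ℕ} (hℓ : ℓ.Prime) (hk : 0 < k) (hkℓ : k < ℓ) {b : ℤ}
    (hb : ¬(ℓ : ℤ) ∣ b) : ¬(ℓ : ℤ) ∣ k * b := by
  intro hdvd
  rcases (Nat.prime_iff_prime_int.1 hℓ).dvd_mul.1 hdvd with h | h
  · exact Nat.not_dvd_of_pos_of_lt hk hkℓ (Int.natCast_dvd_natCast.1 h)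
  · exact hb h

noncomputable def sawtooth (x : ℝ) : ℝ := Int.fract x - 1 / 2

noncomputable def twistedSawtoothSum (ℓ : ℕ) (c : ℤ) (x : ℝ) : ℂ :=
  ∑ t ∈ range ℓ, eE (c * t / ℓ) * sawtooth ((x + t) / ℓ)

lemma twistedSawtoothSum_eq (ℓ : ℕ) (c : ℤ) (x : ℝ) :
    twistedSawtoothSum ℓ c x =
      eE (-(c * ⌊x⌋) / ℓ) *
        ∑ r ∈ range ℓ, eE (c / ℓ) ^ r * ((Int.fract x + r) / ℓ - 1 / 2 : ℝ) := by
  set g : ℤ → ℂ := fun t => eE (c * t / ℓ) * sawtooth ((x + t) / ℓ)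
  have hg : Function.Periodic g ℓ := by
    intro t
    rcases eq_or_ne ℓ 0 with rfl | hℓ
    · simp
    have hphase : c * ((t + ℓ : ℤ) : ℝ) / ℓ = c * t / ℓ + c := by push_cast; field_simp
    have harg : (x + ((t + ℓ : ℤ) : ℝ)) / ℓ = (x + t) / ℓ + 1 := by push_cast; field_simp; ring
    simp only [g, hphase, harg, eE_add, eE_intCast, mul_one, sawtooth, Int.fract_add_one]
  calc twistedSawtoothSum ℓ c x = ∑ t ∈ range ℓ, g t := by simp [twistedSawtoothSum, g]
    _ = ∑ r ∈ range ℓ, g (r + -⌊x⌋) := (hg.sum_range_add _).symm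
    _ = _ := by
      rw [mul_sum]
      refine sum_congr rfl fun r hr => ?_
      have hr : (r : ℝ) + 1 ≤ ℓ := by exact_mod_cast mem_range.1 hr
      have hpos : (0 : ℝ) < ℓ := by linarith [r.cast_nonneg (α := ℝ)]
      have hx : x + ((r + -⌊x⌋ : ℤ) : ℝ) = Int.fract x + r := by
        rw [← Int.self_sub_floor]; push_cast; ring
      have hfract : Int.fract ((Int.fract x + r) / ℓ) = (Int.fract x + r) / ℓ := by
        refine Int.fract_eq_self.2 ⟨by positivity, (div_lt_one hpos).2 ?_⟩
        linarith [Int.fract_lt_one x]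
      have hphase : c * ((r + -⌊x⌋ : ℤ) : ℝ) / ℓ = -(c * ⌊x⌋) / ℓ + r * (c / ℓ) := by
        push_cast; ring
      simp only [g, hx, hphase, eE_add, eE_natCast_mul, sawtooth, hfract]
      ring

lemma twistedSawtoothSum_zero {ℓ : ℕ} (hℓ : ℓ ≠ 0) (x : ℝ) :
    twistedSawtoothSum ℓ 0 x = sawtooth x := by
  have hgauss : (∑ r ∈ range ℓ, (r : ℝ)) * 2 = ℓ * (ℓ - 1) := by
    have h := congrArg (Nat.cast : ℕ → ℝ) (sum_range_id_mul_two ℓ)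
    push_cast [Nat.cast_sub (Nat.one_le_iff_ne_zero.2 hℓ)] at h
    exact h
  have hsum : ∑ r ∈ range ℓ, ((Int.fract x + r) / ℓ - 1 / 2) = sawtooth x := by
    have hℓR : (ℓ : ℝ) ≠ 0 := Nat.cast_ne_zero.2 hℓ
    rw [sum_sub_distrib, ← sum_div, sum_add_distrib, sum_const, card_range, sum_const, card_range,
      sawtooth]
    field_simp
    linear_combination hgauss
  simp [twistedSawtoothSum_eq, eE_zero, ← hsum]

lemma twistedSawtoothSum_of_not_dvd {ℓ : ℕ} (hℓ : ℓ ≠ 0) {c : ℤ} (hc : ¬(ℓ : ℤ) ∣ c) (x : ℝ) :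
    twistedSawtoothSum ℓ c x = eE (-(c * ⌊x⌋) / ℓ) / (eE (c / ℓ) - 1) := by
  have hω : eE (c / ℓ) ≠ 1 := mt (eE_intCast_div_eq_one_iff hℓ c).1 hc
  have hωℓ := eE_intCast_div_pow_self hℓ c
  have hℓC : (ℓ : ℂ) ≠ 0 := Nat.cast_ne_zero.2 hℓ
  have hsplit : ∀ r : ℕ, eE (c / ℓ) ^ r * ((Int.fract x + r) / ℓ - 1 / 2 : ℝ) =
      ((Int.fract x / ℓ - 1 / 2 : ℝ) : ℂ) * eE (c / ℓ) ^ r + 1 / ℓ * (r * eE (c / ℓ) ^ r) := by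
    intro r
    push_cast
    ring
  simp only [twistedSawtoothSum_eq, hsplit, sum_add_distrib, ← mul_sum,
    geom_sum_eq_zero_of_pow_eq_one hω hωℓ, sum_range_mul_pow_of_pow_eq_one hω hωℓ]
  field_simp
  ring

lemma BBQ_one_of_forall_not_int {n m : ℕ} (hm : 0 < m) (Q : Matrix (Fin m) (Fin n) ℝ)
    {v : Fin n → ℝ} (hv : ∀ j, ¬∃ t : ℤ, v j = t) :
    BBQ Q (fun _ => 1) v = ∏ j, sawtooth (v j) := by
  have hJ : Jset (fun _ => 1) v = ∅ := by simp [Jset, hv]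
  have hmR : (m : ℝ) ≠ 0 := Nat.cast_ne_zero.2 hm.ne'
  simp [BBQ, hJ, periodicBernoulli, hv, sawtooth, hmR]

lemma not_int_add_natCast_div {x : ℝ} (hx : ¬∃ t : ℤ, x = t) {ℓ : ℕ} (hℓ : ℓ ≠ 0) (y : ℕ) :
    ¬∃ t : ℤ, (x + y) / ℓ = t := by
  rintro ⟨t, ht⟩
  rw [div_eq_iff (Nat.cast_ne_zero.2 hℓ)] at ht
  exact hx ⟨t * ℓ - y, by push_cast; linarith⟩

lemma BBLz_one_eq {n m : ℕ} (hm : 0 < m) {ℓ : ℕ} (hℓ : ℓ ≠ 0) (a : Fin n → ℤ)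
    (Q : Matrix (Fin m) (Fin n) ℝ) (z : ZMod ℓ) {x : Fin n → ℝ}
    (hx : ∀ j, ¬∃ t : ℤ, x j = t) :
    BBLz ℓ a Q (fun _ => 1) z x = ∏ j, sawtooth (x j) - ℓ * ∑ y : Fin n → Fin ℓ,
      if ∑ j, (a j : ZMod ℓ) * ((y j : ℕ) : ZMod ℓ) = z then
        ∏ j, sawtooth ((x j + (y j : ℕ)) / ℓ) else 0 := by
  have hexp : (1 : ℤ) - n + ∑ _j : Fin n, ((1 : ℕ) : ℤ) = 1 := by simp
  simp only [BBLz, hexp, zpow_one, BBQ_one_of_forall_not_int hm Q hx,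
    BBQ_one_of_forall_not_int hm Q (fun j => not_int_add_natCast_div (hx j) hℓ _)]

lemma sum_eE_mul_prod_sawtooth {n ℓ : ℕ} (c : Fin n → ℤ) (w : ℝ) (x : Fin n → ℝ) :
    ∑ y : Fin n → Fin ℓ, eE (w + ∑ j, c j * ((y j : ℕ) : ℝ) / ℓ) *
        ∏ j, (sawtooth ((x j + (y j : ℕ)) / ℓ) : ℂ) =
      eE w * ∏ j, twistedSawtoothSum ℓ (c j) (x j) := by
  simp only [eE_add, eE_sum, mul_assoc, ← prod_mul_distrib, ← mul_sum]
  congr 1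
  simp only [twistedSawtoothSum, ← Fin.sum_univ_eq_sum_range]
  rw [Fintype.prod_sum]

lemma natCast_mul_sum_ite_eq {n ℓ : ℕ} (hℓ : ℓ ≠ 0) (a : Fin n → ℤ) {z : ZMod ℓ} {zt : ℤ}
    (hz : (zt : ZMod ℓ) = z) (x : Fin n → ℝ) :
    (((ℓ : ℝ) * ∑ y : Fin n → Fin ℓ,
      if ∑ j, (a j : ZMod ℓ) * ((y j : ℕ) : ZMod ℓ) = z then
        ∏ j, sawtooth ((x j + (y j : ℕ)) / ℓ) else 0 : ℝ) : ℂ) =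
      ∑ k ∈ range ℓ, eE (-(k * zt) / ℓ) * ∏ j, twistedSawtoothSum ℓ (k * a j) (x j) := by
  set N : (Fin n → Fin ℓ) → ℤ := fun y => ∑ j, a j * (y j : ℕ) - zt
  have hcond : ∀ y, ∑ j, (a j : ZMod ℓ) * ((y j : ℕ) : ZMod ℓ) = z ↔ (ℓ : ℤ) ∣ N y := by
    intro y
    rw [← ZMod.intCast_zmod_eq_zero_iff_dvd, sub_eq_zero.symm]
    push_cast [N, hz]
    rfl
  have hphase : ∀ (k : ℕ) y, k * (N y : ℝ) / ℓ =
      -(k * zt) / ℓ + ∑ j, ((k * a j : ℤ) : ℝ) * ((y j : ℕ) : ℝ) / ℓ := by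
    intro k y
    push_cast [N]
    rw [mul_sub, mul_sum, sub_div, sum_div, neg_div, neg_add_eq_sub]
    simp only [mul_assoc]
  calc _ = ∑ y : Fin n → Fin ℓ, (if (ℓ : ℤ) ∣ N y then (ℓ : ℂ) else 0) *
        ∏ j, (sawtooth ((x j + (y j : ℕ)) / ℓ) : ℂ) := by
        push_cast
        rw [mul_sum]
        refine sum_congr rfl fun y _ => ?_
        simp only [hcond]
        split_ifs <;> simp
    _ = ∑ k ∈ range ℓ, ∑ y : Fin n → Fin ℓ, eE (k * N y / ℓ) *
        ∏ j, (sawtooth ((x j + (y j : ℕ)) / ℓ) : ℂ) := by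
        simp only [← sum_range_eE_mul_div hℓ, sum_mul]
        exact sum_comm
    _ = _ := by
        simp only [hphase, sum_eE_mul_prod_sawtooth]

theorem BBLz_one_eval_of_not_int_general {n m : ℕ} (hm : 0 < m)
    (ℓ : ℕ) (hℓ : ℓ.Prime) (a : Fin n → ℤ) (ha : ∀ j, ¬ (ℓ : ℤ) ∣ a j)
    (Q : Matrix (Fin m) (Fin n) ℝ)
    (z : ZMod ℓ) (zt : ℤ) (hz : (zt : ZMod ℓ) = z)
    (x : Fin n → ℝ) (hx : ∀ j, ¬ ∃ t : ℤ, x j = (t : ℝ)) :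
    ((BBLz ℓ a Q (fun _ => 1) z x : ℝ) : ℂ)
      = -∑ k ∈ Finset.Icc 1 (ℓ - 1),
          eE (-((k : ℝ) * ((zt : ℝ) + ∑ j, (a j : ℝ) * ((⌊x j⌋ : ℤ) : ℝ))) / (ℓ : ℝ)) /
            ∏ j, (eE (((k : ℝ) * (a j : ℝ)) / (ℓ : ℝ)) - 1) := by
  have hℓ0 := hℓ.ne_zero
  have hterm : ∀ k ∈ Ico 1 ℓ, eE (-(k * zt) / ℓ) * ∏ j, twistedSawtoothSum ℓ (k * a j) (x j) =
      eE (-((k : ℝ) * ((zt : ℝ) + ∑ j, (a j : ℝ) * ((⌊x j⌋ : ℤ) : ℝ))) / (ℓ : ℝ)) /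
        ∏ j, (eE (((k : ℝ) * (a j : ℝ)) / (ℓ : ℝ)) - 1) := by
    intro k hk
    obtain ⟨hk0, hkℓ⟩ := mem_Ico.1 hk
    simp only [twistedSawtoothSum_of_not_dvd hℓ0 (hℓ.not_intCast_dvd_mul hk0 hkℓ (ha _)),
      prod_div_distrib, ← eE_sum, ← mul_div_assoc, ← eE_add]
    push_cast
    congr 2
    simp only [mul_add, mul_sum, neg_add, add_div, sum_div, ← sum_neg_distrib, neg_div, mul_assoc]
  have hIcc : Icc 1 (ℓ - 1) = Ico 1 ℓ := by ext; simp only [mem_Icc, mem_Ico]; omega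
  rw [BBLz_one_eq hm hℓ0 a Q z hx, Complex.ofReal_sub, natCast_mul_sum_ite_eq hℓ0 a hz x,
    range_eq_Ico, sum_eq_sum_Ico_succ_bot hℓ.pos, hIcc, sum_congr rfl hterm]
  simp [twistedSawtoothSum_zero hℓ0, eE_zero]

/-- Closed evaluation of `𝐁_𝟙^{L,z}(x,Q)` when no coordinate of `x` is an integer:
`𝐁_𝟙^{L,z}(x,Q) = −Σ_{k=1}^{ℓ−1} e(−k(z̃ + Σ_j a_j⌊x_j⌋)/ℓ) / ∏_j (e(k·a_j/ℓ) − 1)`.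
In particular the value does not depend on `Q`. -/
theorem BBLz_one_eval_of_not_int {n m : ℕ} (hm : 0 < m)
    (ℓ : ℕ) (hℓ : ℓ.Prime) (a : Fin n → ℤ) (ha : ∀ j, ¬ (ℓ : ℤ) ∣ a j)
    (Q : Matrix (Fin m) (Fin n) ℝ) (hQ : ∀ i j, Q i j ≠ 0)
    (z : ZMod ℓ) (zt : ℤ) (hz : (zt : ZMod ℓ) = z)
    (x : Fin n → ℝ) (hx : ∀ j, ¬ ∃ t : ℤ, x j = (t : ℝ)) :
    ((BBLz ℓ a Q (fun _ => 1) z x : ℝ) : ℂ)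
      = -∑ k ∈ Finset.Icc 1 (ℓ - 1),
          eE (-((k : ℝ) * ((zt : ℝ) + ∑ j, (a j : ℝ) * ((⌊x j⌋ : ℤ) : ℝ))) / (ℓ : ℝ)) /
            ∏ j, (eE (((k : ℝ) * (a j : ℝ)) / (ℓ : ℝ)) - 1) :=
  BBLz_one_eval_of_not_int_general hm ℓ hℓ a ha Q z zt hz x hx
end
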